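/- Let u, v ≥ 2 be integers with uv ≠ 4 and M = [[a,b],[c,d]] ∈ 𝒢_{u,v}. Then M belongs to the group generated by L_u and R_v if and only if (f_{u,v} ∘ C)(b/d) satisfies the (u,v)-divisibility property (v divides entries in even positions, u divides entries in odd positions). -/

import Mathlib

abbrev SL2 := Matrix.SpecialLinearGroup (Fin 2) ℤ

/-- `L_u = [[1,0],[u,1]]`. -/
def Lmat (u : ℤ) : SL2 :=
  ⟨!![1, 0; u, 1], by simp [Matrix.det_fin_two_of]⟩

/-- `R_v = [[1,v],[0,1]]`. -/
def Rmat (v : ℤ) : SL2 :=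
  ⟨!![1, v; 0, 1], by simp [Matrix.det_fin_two_of]⟩

/-- The set `𝒢_{u,v}`. -/
def Gscr (u v : ℤ) : Set SL2 :=
  {M | ∃ n1 n2 n3 n4 : ℤ,
    (M : Matrix (Fin 2) (Fin 2) ℤ) = !![1 + u*v*n1, v*n2; u*n3, 1 + u*v*n4]}

/-- The group `G_{u,v}` generated by `L_u` and `R_v`. -/
def Guv (u v : ℤ) : Subgroup SL2 := Subgroup.closure {Lmat u, Rmat v}

/-- Alternating product `R^{a₀} L^{a₁} R^{a₂} ⋯` from a list of exponents
(the boolean records whether the next factor is a power of `R`). -/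
def altProd (u v : ℤ) : Bool → List ℤ → SL2
  | _, [] => 1
  | true, a :: l => (Rmat v) ^ a * altProd u v false l
  | false, a :: l => (Lmat u) ^ a * altProd u v true l


/-- Evaluation of a finite continued fraction `[q₀, q₁, …, q_r]`. -/
def E : List ℤ → ℚ
  | [] => 0
  | [q] => (q : ℚ)
  | q :: l => (q : ℚ) + 1 / E l

/-- Concatenation `⊕` of finite sequences, merging when the second begins with `0`. -/
def oplus (a b : List ℤ) : List ℤ :=
  match b with
  | [] => a
  | p :: ps =>
    if p = 0 then
      match ps with
      | [] => a
      | p1 :: ps' => a.dropLast ++ (a.getLast! + p1) :: ps'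
    else a ++ (p :: ps)

/-- No tail continued fraction `[q_i, …, q_r]` (for `0 < i < r`) evaluates to `0`. -/
def TailsNonzero (l : List ℤ) : Prop :=
  ∀ i, 0 < i → i + 1 < l.length → E (l.drop i) ≠ 0

/-- `[q₀, …, q_r]` is a short continued fraction: `q_i ≥ 1` for `0 < i < r`, `q_r > 1` if `r > 0`. -/
def IsShortCF (l : List ℤ) : Prop :=
  l ≠ [] ∧ (∀ i, 0 < i → i + 1 < l.length → 1 ≤ l.getD i 0) ∧
    (1 < l.length → 1 < l.getD (l.length - 1) 0)

/-- Membership in `A₁`. -/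
def memA1 (l : List ℤ) : Prop := IsShortCF l ∧ TailsNonzero l

/-- Membership in `A₂`: all entries after the first have absolute value `> 1`. -/
def memA2 (l : List ℤ) : Prop :=
  l ≠ [] ∧ (∀ i, 0 < i → i < l.length → 1 < |l.getD i 0|) ∧ TailsNonzero l

/-- The `(u,v)`-divisibility property: `v` divides even-indexed entries, `u` odd-indexed ones. -/
def DivProp (u v : ℤ) (l : List ℤ) : Prop :=
  ∀ i, i < l.length → (if i % 2 = 0 then v else u) ∣ l.getD i 0

/-- The function `f_{u,v} : A₁ → A₂`. -/
def fCF (u v : ℤ) : List ℤ → List ℤ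
  | [] => []
  | [q0] => [q0]
  | q0 :: q1 :: rest =>
    if ¬ (v ∣ q0) ∧ q1 = 1 then
      match rest with
      | [] => [q0 + 1]
      | q2 :: rest' => oplus [q0 + 1] ((fCF v u ((q2 + 1) :: rest')).map (fun x => -x))
    else if ¬ (v ∣ q0) ∧ q1 = 2 then
      match rest with
      | [] => [q0 + 1, -2]
      | q2 :: rest' => oplus [q0 + 1] (fCF v u (-2 :: (q2 + 1) :: rest'))
    else oplus [q0] (fCF v u (q1 :: rest))
termination_by l => l.length
decreasing_by all_goals (simp_all [List.length]; try omega)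

/-- The function `g_{u,v} : A₂ → A₁`. -/
def gCF (u v : ℤ) : List ℤ → List ℤ
  | [] => []
  | [q0] => [q0]
  | q0 :: q1 :: rest =>
    if (q1 < 0 ∧ u ≠ 2) ∨ (q1 < -2 ∧ u = 2) then
      oplus [q0 - 1, 1] ((gCF v u (((q1 + 1) :: rest).map (fun x => -x))))
    else if q1 = -2 ∧ u = 2 then
      match rest with
      | [] => [q0 - 1, 2]
      | q2 :: rest' => oplus [q0 - 1, 2] (gCF v u ((q2 - 1) :: rest'))
    else oplus [q0] (gCF v u (q1 :: rest))
termination_by l => l.length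
decreasing_by all_goals (simp_all [List.length]; try omega)


/-!
Write `(b, d)` for the second column of `M`. Every element of `G_{u,v}` is a word
`R_{s₀} L_{s₁} ⋯ R_{s₂ₙ}` times a power of `L_u`, with `v ∣ s_{2i}`, `u ∣ s_{2i+1}` and
`s_i ≠ 0` for `i > 0`. The power of `L_u` does not move the second column, and the second
column of the word has ratio `[s₀; s₁, …, s₂ₙ]`; since `|s_i| ≥ 2` for `i > 0`, every tail of
this expansion has absolute value `> 1`. The map `f_{u,v}` undoes the normalisation of such an
expansion into the short one, so `f_{u,v}(C(b/d)) = s`, which has the divisibility property.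

Conversely, if `t = f_{u,v}(C(b/d))` has the divisibility property, then
`N = R_{t₀} L_{t₁} ⋯ ∈ G_{u,v}`. As `f_{u,v}` keeps the value and produces tails of absolute
value `> 1`, one column of `N` (the first or the second, according to the parity of the length
of `t`) is a primitive vector of ratio `b/d`, hence `± (b, d)`. Reducing modulo `u` excludes the
first column, and modulo `uv` the sign `-`; so `N` and `M` share their second column, and
`N⁻¹ M` is a power of `L_u`.
-/

-- For `l = []` this uses `1 / 0 = 0` in `ℚ`.
lemma E_cons (a : ℤ) (l : List ℤ) : E (a :: l) = a + 1 / E l := by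
  cases l <;> simp [E]

lemma E_map_neg (l : List ℤ) : E (l.map (fun x => -x)) = -E l := by
  induction l with
  | nil => simp [E]
  | cons a l ih => simp only [List.map_cons, E_cons, ih]; push_cast; ring

lemma E_cons_add (a k : ℤ) (l : List ℤ) : E ((a + k) :: l) = E (a :: l) + k := by
  rw [E_cons, E_cons]; push_cast; ring

lemma E_cons_inj {a : ℤ} {l l' : List ℤ} : E (a :: l) = E (a :: l') ↔ E l = E l' := by
  rw [E_cons, E_cons, add_right_inj, one_div, one_div, inv_inj]

lemma oplus_singleton_cons (x : ℤ) {p : ℤ} (hp : p ≠ 0) (ps : List ℤ) :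
    oplus [x] (p :: ps) = x :: p :: ps := by
  simp [oplus, hp]

lemma sub_one_lt_abs_E {a : ℤ} {l : List ℤ} (h : ∀ x ∈ a :: l, 2 ≤ |x|) :
    (|a| : ℚ) - 1 < |E (a :: l)| := by
  induction l generalizing a with
  | nil => simp [E]
  | cons b l ih =>
    simp only [List.forall_mem_cons] at h ih
    have hb : (2 : ℚ) ≤ |(b : ℚ)| := by exact_mod_cast h.2.1
    have hE : 1 < |E (b :: l)| := by linarith [ih ⟨h.2.1, h.2.2⟩]
    have hinv : |1 / E (b :: l)| < 1 := by
      rw [abs_div, abs_one, div_lt_one (by linarith)]; exact hE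
    rw [E_cons]
    have := abs_sub_abs_le_abs_sub (a : ℚ) (-(1 / E (b :: l)))
    rw [abs_neg, sub_neg_eq_add] at this
    linarith

lemma one_lt_abs_E {l : List ℤ} (hne : l ≠ []) (h : ∀ x ∈ l, 2 ≤ |x|) : 1 < |E l| := by
  obtain ⟨a, l, rfl⟩ := List.exists_cons_of_ne_nil hne
  have ha : (2 : ℚ) ≤ |(a : ℚ)| := by exact_mod_cast h a List.mem_cons_self
  linarith [sub_one_lt_abs_E h]

def TailsBig (l : List ℤ) : Prop :=
  ∀ i, 0 < i → i < l.length → 1 < |E (l.drop i)|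

lemma TailsBig.cons (a : ℤ) {l : List ℤ} (hl : 1 < |E l|) (h : TailsBig l) :
    TailsBig (a :: l) := by
  rintro (_ | _ | i) hi hil
  · exact absurd hi (lt_irrefl 0)
  · simpa using hl
  · exact h (i + 1) i.succ_pos (by simpa using hil)

lemma TailsBig.map_neg {l : List ℤ} (h : TailsBig l) : TailsBig (l.map (fun x => -x)) := by
  intro i hi hil
  rw [← List.map_drop, E_map_neg, abs_neg]
  exact h i hi (by simpa using hil)

lemma TailsBig.drop_two {a b : ℤ} {l : List ℤ} (h : TailsBig (a :: b :: l)) : TailsBig l :=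
  fun i hi hil => by simpa using h (i + 2) (by omega) (by simp; omega)

lemma tailsBig_of_two_le_abs {a : ℤ} {l : List ℤ} (h : ∀ x ∈ l, 2 ≤ |x|) :
    TailsBig (a :: l) := by
  rintro (_ | i) hi hil
  · exact absurd hi (lt_irrefl 0)
  · exact one_lt_abs_E (by simpa using hil)
      fun x hx => h x (List.mem_of_mem_drop (by simpa using hx))

lemma divProp_nil (u v : ℤ) : DivProp u v [] := fun i hi => absurd hi (Nat.not_lt_zero i)

lemma divProp_cons {u v a : ℤ} {l : List ℤ} :
    DivProp u v (a :: l) ↔ v ∣ a ∧ DivProp v u l := by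
  constructor
  · intro h
    refine ⟨by simpa using h 0 (by simp), fun i hi => ?_⟩
    have := h (i + 1) (by simpa using hi)
    rcases Nat.mod_two_eq_zero_or_one i with h0 | h0 <;>
      simpa [h0, Nat.add_mod] using this
  · rintro ⟨ha, h⟩ (_ | i) hi
    · simpa using ha
    · have := h i (by simpa using hi)
      rcases Nat.mod_two_eq_zero_or_one i with h0 | h0 <;>
        simpa [h0, Nat.add_mod] using this

lemma divProp_cons_cons {u v a b : ℤ} {l : List ℤ} :
    DivProp u v (a :: b :: l) ↔ v ∣ a ∧ u ∣ b ∧ DivProp u v l := by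
  rw [divProp_cons, divProp_cons]

lemma DivProp.map_neg {u v : ℤ} {l : List ℤ} (h : DivProp u v l) :
    DivProp u v (l.map (fun x => -x)) := by
  induction l generalizing u v with
  | nil => exact divProp_nil u v
  | cons a l ih =>
    obtain ⟨ha, hl⟩ := divProp_cons.mp h
    exact divProp_cons.mpr ⟨dvd_neg.mpr ha, ih hl⟩

lemma DivProp.two_le_abs {u v : ℤ} (hu : 2 ≤ u) (hv : 2 ≤ v) {l : List ℤ}
    (h : DivProp u v l) (hl : ∀ x ∈ l, x ≠ 0) : ∀ x ∈ l, 2 ≤ |x| := by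
  induction l generalizing u v with
  | nil => simp
  | cons a l ih =>
    obtain ⟨ha, hl'⟩ := divProp_cons.mp h
    simp only [List.forall_mem_cons] at hl ⊢
    have := Int.le_of_dvd (abs_pos.mpr hl.1) ((dvd_abs _ _).mpr ha)
    exact ⟨by omega, ih hv hu hl' hl.2⟩

lemma not_dvd_sub_one {v a : ℤ} (hv : 2 ≤ v) (h : v ∣ a) : ¬ v ∣ a - 1 := fun h' => by
  have := Int.le_of_dvd one_pos (by simpa using dvd_sub h h')
  omega

lemma isShortCF_singleton (a : ℤ) : IsShortCF [a] :=
  ⟨List.cons_ne_nil a [], fun i hi hil => by simp at hil, fun h => by simp at h⟩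

lemma isShortCF_cons_cons {a b : ℤ} {l : List ℤ} :
    IsShortCF (a :: b :: l) ↔ IsShortCF (b :: l) ∧ 1 ≤ b ∧ (l = [] → 2 ≤ b) := by
  rcases eq_or_ne l [] with rfl | hl
  · simp only [isShortCF_singleton, true_and, forall_const]
    refine ⟨fun h => ?_, fun h => ⟨by simp, fun i hi hil => by simp at hil; omega,
      fun _ => by simp; omega⟩⟩
    have := h.2.2 (by simp)
    simp at this
    omega
  · have hlen : 0 < l.length := List.length_pos_iff.mpr hl
    simp only [IsShortCF, ne_eq, reduceCtorEq, not_false_eq_true, true_and, List.length_cons,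
      hl, IsEmpty.forall_iff, and_true]
    constructor
    · rintro ⟨hmid, hlast⟩
      refine ⟨⟨fun i hi hil => ?_, fun _ => ?_⟩, by simpa using hmid 1 one_pos (by omega)⟩
      · simpa using hmid (i + 1) (by omega) (by omega)
      · simpa [show l.length + 1 - 1 = l.length by omega] using hlast (by omega)
    · rintro ⟨⟨hmid, hlast⟩, hb⟩
      refine ⟨fun i hi hil => ?_, fun _ => ?_⟩
      · obtain ⟨_ | j, rfl⟩ : ∃ j, i = j + 1 := ⟨i - 1, by omega⟩
        · simpa using hb
        · simpa using hmid (j + 1) (by omega) (by omega)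
      · simpa [show l.length + 1 - 1 = l.length by omega] using hlast (by omega)

lemma IsShortCF.of_cons {a : ℤ} {l : List ℤ} (h : IsShortCF (a :: l)) (hl : l ≠ []) :
    IsShortCF l := by
  obtain ⟨b, l, rfl⟩ := List.exists_cons_of_ne_nil hl
  exact (isShortCF_cons_cons.mp h).1

lemma IsShortCF.cons_of_cons {a : ℤ} {l : List ℤ} (h : IsShortCF (a :: l)) (b : ℤ) :
    IsShortCF (b :: l) := by
  rcases l with _ | ⟨c, l⟩
  · exact isShortCF_singleton b
  · exact isShortCF_cons_cons.mpr (isShortCF_cons_cons.mp h)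

lemma IsShortCF.one_lt_E_of_cons {a : ℤ} {l : List ℤ} (h : IsShortCF (a :: l)) (hl : l ≠ []) :
    1 < E l := by
  induction l generalizing a with
  | nil => exact absurd rfl hl
  | cons b l ih =>
    obtain ⟨hbl, hb1, hb2⟩ := isShortCF_cons_cons.mp h
    rcases eq_or_ne l [] with rfl | hl'
    · have := hb2 rfl
      simp only [E]
      exact_mod_cast this
    · have h1 := ih hbl hl'
      have : 0 < 1 / E l := by positivity
      rw [E_cons]
      have : (1 : ℚ) ≤ b := by exact_mod_cast hb1
      linarith

lemma IsShortCF.lt_E_lt {a : ℤ} {l : List ℤ} (h : IsShortCF (a :: l)) (hl : l ≠ []) :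
    (a : ℚ) < E (a :: l) ∧ E (a :: l) < a + 1 := by
  have h1 := h.one_lt_E_of_cons hl
  have : 1 / E l < 1 := by rw [div_lt_one (by linarith)]; exact h1
  rw [E_cons]
  constructor <;> linarith [one_div_pos.mpr (zero_lt_one.trans h1)]

lemma IsShortCF.eq_singleton_of_E_eq {t : List ℤ} (ht : IsShortCF t) {n : ℤ}
    (hE : E t = n) : t = [n] := by
  obtain ⟨a, l, rfl⟩ := List.exists_cons_of_ne_nil ht.1
  rcases eq_or_ne l [] with rfl | hl
  · simp only [E, Int.cast_inj] at hE
    rw [hE]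
  · obtain ⟨h1, h2⟩ := ht.lt_E_lt hl
    rw [hE] at h1 h2
    have : a < n := by exact_mod_cast h1
    have : n < a + 1 := by exact_mod_cast h2
    omega

lemma IsShortCF.eq_cons_of_lt_E {t : List ℤ} (ht : IsShortCF t) {k : ℤ} (h1 : k < E t)
    (h2 : E t < k + 1) : ∃ t', t = k :: t' ∧ IsShortCF t' ∧ E t' = 1 / (E t - k) := by
  obtain ⟨a, l, rfl⟩ := List.exists_cons_of_ne_nil ht.1
  rcases eq_or_ne l [] with rfl | hl
  · simp only [E] at h1 h2
    have : k < a := by exact_mod_cast h1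
    have : a < k + 1 := by exact_mod_cast h2
    omega
  obtain ⟨h3, h4⟩ := ht.lt_E_lt hl
  have hak : a = k := by
    have : a < k + 1 := by exact_mod_cast h3.trans h2
    have : k < a + 1 := by exact_mod_cast h1.trans h4
    omega
  subst hak
  refine ⟨l, rfl, ht.of_cons hl, ?_⟩
  rw [E_cons, add_sub_cancel_left, one_div_one_div]

lemma E_cons_one_cons (a b : ℤ) (l : List ℤ) (h : 0 < E (b :: l)) :
    E (a :: 1 :: b :: l) = E ((a + 1) :: ((b + 1) :: l).map (fun x => -x)) := by
  rw [E_cons a, E_cons 1, E_cons (a + 1), E_map_neg, E_cons_add]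
  have : E (b :: l) + 1 ≠ 0 := by linarith
  field_simp
  push_cast
  ring

lemma E_cons_two_cons (a b : ℤ) (l : List ℤ) (h : 0 < E (b :: l)) :
    E (a :: 2 :: b :: l) = E ((a + 1) :: -2 :: (b + 1) :: l) := by
  rw [E_cons a, E_cons 2, E_cons (a + 1), E_cons (-2), E_cons_add]
  set y := E (b :: l)
  have e1 : (2 : ℚ) + 1 / y = (2 * y + 1) / y := by field_simp
  have e2 : ((-2 : ℤ) : ℚ) + 1 / (y + (1 : ℤ)) = -(2 * y + 1) / (y + 1) := by
    push_cast; field_simp; ring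
  have : 2 * y + 1 ≠ 0 := by linarith
  rw [Int.cast_ofNat, e1, e2, one_div_div, one_div_div]
  field_simp
  push_cast
  ring

section fCF

variable (u v : ℤ)

lemma fCF_singleton (q0 : ℤ) : fCF u v [q0] = [q0] := by simp [fCF]

lemma fCF_cons_one_cons {q0 : ℤ} (h : ¬ v ∣ q0) (q2 : ℤ) (l : List ℤ) :
    fCF u v (q0 :: 1 :: q2 :: l) =
      oplus [q0 + 1] ((fCF v u ((q2 + 1) :: l)).map (fun x => -x)) := by
  rw [fCF.eq_def]; simp [h]

lemma fCF_pair_two {q0 : ℤ} (h : ¬ v ∣ q0) : fCF u v [q0, 2] = [q0 + 1, -2] := by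
  rw [fCF.eq_def]; simp [h]

lemma fCF_cons_two_cons {q0 : ℤ} (h : ¬ v ∣ q0) (q2 : ℤ) (l : List ℤ) :
    fCF u v (q0 :: 2 :: q2 :: l) = oplus [q0 + 1] (fCF v u (-2 :: (q2 + 1) :: l)) := by
  rw [fCF.eq_def]; simp [h]

lemma fCF_cons_cons_of_not {q0 q1 : ℤ} (h1 : ¬ (¬ v ∣ q0 ∧ q1 = 1))
    (h2 : ¬ (¬ v ∣ q0 ∧ q1 = 2)) (l : List ℤ) :
    fCF u v (q0 :: q1 :: l) = oplus [q0] (fCF v u (q1 :: l)) := by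
  rw [fCF.eq_def]; simp only [if_neg h1, if_neg h2]

lemma fCF_cons_cons_of_dvd {q0 : ℤ} (h : v ∣ q0) (q1 : ℤ) (l : List ℤ) :
    fCF u v (q0 :: q1 :: l) = oplus [q0] (fCF v u (q1 :: l)) :=
  fCF_cons_cons_of_not u v (fun h' => h'.1 h) (fun h' => h'.1 h) l

end fCF

-- The bound on the head keeps it nonzero in the recursion, so that `oplus` never merges.
def IsBigTailExpansion (t r : List ℤ) : Prop :=
  (∃ c r', r = c :: r' ∧ t.headD 0 ≤ c ∧ c ≤ t.headD 0 + 1) ∧ E r = E t ∧ TailsBig r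

lemma IsBigTailExpansion.cons {q0 q1 : ℤ} {l r : List ℤ} (hq1 : 1 ≤ q1) (hy : 1 < E (q1 :: l))
    (h : IsBigTailExpansion (q1 :: l) r) : IsBigTailExpansion (q0 :: q1 :: l) (oplus [q0] r) := by
  obtain ⟨⟨c, r, rfl, hc, -⟩, hE, hT⟩ := h
  simp only [List.headD_cons] at hc
  rw [oplus_singleton_cons _ (by omega)]
  refine ⟨⟨q0, _, rfl, by simp, by simp⟩, by rw [E_cons, E_cons q0, hE], hT.cons _ ?_⟩
  rw [hE, lt_abs]; left; exact hy

lemma IsBigTailExpansion.cons_one_cons {q0 p1 : ℤ} {l r : List ℤ} (hp1 : 1 ≤ p1)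
    (hy : 1 < E (p1 :: l)) (h : IsBigTailExpansion ((p1 + 1) :: l) r) :
    IsBigTailExpansion (q0 :: 1 :: p1 :: l) (oplus [q0 + 1] (r.map (fun x => -x))) := by
  obtain ⟨⟨c, r, rfl, hc, -⟩, hE, hT⟩ := h
  simp only [List.headD_cons] at hc
  rw [List.map_cons, oplus_singleton_cons _ (neg_ne_zero.mpr (by omega)), ← List.map_cons]
  refine ⟨⟨q0 + 1, _, rfl, by simp, by simp⟩, ?_, hT.map_neg.cons _ ?_⟩
  · rw [E_cons_one_cons _ _ _ (by linarith), E_cons, E_cons (q0 + 1), E_map_neg, E_map_neg, hE]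
  · rw [E_map_neg, abs_neg, hE, E_cons_add, Int.cast_one, lt_abs]
    left; linarith

lemma IsBigTailExpansion.cons_two_cons {q0 p1 : ℤ} {l r : List ℤ} (hy : 1 < E (p1 :: l))
    (h : IsBigTailExpansion (-2 :: (p1 + 1) :: l) r) :
    IsBigTailExpansion (q0 :: 2 :: p1 :: l) (oplus [q0 + 1] r) := by
  obtain ⟨⟨c, r, rfl, hc, hc'⟩, hE, hT⟩ := h
  simp only [List.headD_cons] at hc hc'
  rw [oplus_singleton_cons _ (by omega)]
  have hEr : E (c :: r) = -2 + 1 / (E (p1 :: l) + 1) := by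
    rw [hE, E_cons, E_cons_add]; push_cast; ring
  have : 0 < 1 / (E (p1 :: l) + 1) := by positivity
  have : 1 / (E (p1 :: l) + 1) < 1 := by rw [div_lt_one (by linarith)]; linarith
  refine ⟨⟨q0 + 1, _, rfl, by simp, by simp⟩, ?_, hT.cons _ ?_⟩
  · rw [E_cons_two_cons _ _ _ (by linarith), E_cons, E_cons (q0 + 1), hE]
  · rw [hEr, lt_abs]; right; linarith

theorem IsShortCF.isBigTailExpansion_fCF (u v : ℤ) {t : List ℤ} (ht : IsShortCF t) :
    IsBigTailExpansion t (fCF u v t) := by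
  induction u, v, t using fCF.induct with
  | case1 => exact absurd rfl ht.1
  | case2 u v q0 =>
    rw [fCF_singleton]
    exact ⟨⟨q0, [], rfl, le_rfl, by simp⟩, rfl, fun i hi hil => by simp at hil; omega⟩
  | case3 u v q0 q1 h =>
    have := (isShortCF_cons_cons.mp ht).2.2 rfl
    omega
  | case4 u v q0 q1 h p1 l ih =>
    obtain ⟨hv, rfl⟩ := h
    have ht' := (isShortCF_cons_cons.mp ht).1
    obtain ⟨hpl, hp1, -⟩ := isShortCF_cons_cons.mp ht'
    rw [fCF_cons_one_cons u v hv]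
    exact .cons_one_cons hp1 (ht'.one_lt_E_of_cons (List.cons_ne_nil p1 l))
      (ih (hpl.cons_of_cons (p1 + 1)))
  | case5 u v q0 q1 _ h =>
    obtain ⟨hv, rfl⟩ := h
    rw [fCF_pair_two u v hv]
    refine ⟨⟨q0 + 1, _, rfl, by simp, by simp⟩, ?_, ?_⟩
    · simp only [E]; push_cast; ring
    · exact TailsBig.cons _ (by simp [E]) (fun i hi hil => by simp at hil; omega)
  | case6 u v q0 q1 _ h p1 l ih =>
    obtain ⟨hv, rfl⟩ := h
    have ht' := (isShortCF_cons_cons.mp ht).1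
    obtain ⟨hpl, hp1, hp2⟩ := isShortCF_cons_cons.mp ht'
    rw [fCF_cons_two_cons u v hv]
    exact .cons_two_cons (ht'.one_lt_E_of_cons (List.cons_ne_nil p1 l)) (ih (isShortCF_cons_cons.mpr
      ⟨hpl.cons_of_cons (p1 + 1), by omega, fun h => by have := hp2 h; omega⟩))
  | case7 u v q0 q1 l h1 h2 ih =>
    rw [fCF_cons_cons_of_not u v h1 h2]
    exact .cons (isShortCF_cons_cons.mp ht).2.1 (ht.one_lt_E_of_cons (List.cons_ne_nil q1 l))
      (ih (ht.of_cons (List.cons_ne_nil q1 l)))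

def IsReducedWord (u v : ℤ) (s : List ℤ) : Prop :=
  DivProp u v s ∧ ∀ x ∈ s.tail, x ≠ 0

lemma IsReducedWord.tail {u v a b : ℤ} {l : List ℤ} (h : IsReducedWord u v (a :: b :: l)) :
    IsReducedWord v u (b :: l) :=
  ⟨(divProp_cons.mp h.1).2, fun x hx => h.2 x (List.mem_cons_of_mem b hx)⟩

lemma IsReducedWord.map_neg {u v : ℤ} {s : List ℤ} (h : IsReducedWord u v s) :
    IsReducedWord u v (s.map (fun x => -x)) :=
  ⟨h.1.map_neg, by
    rw [← List.map_tail]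
    intro y hy
    obtain ⟨x, hx, rfl⟩ := List.mem_map.mp hy
    exact neg_ne_zero.mpr (h.2 x hx)⟩

lemma IsReducedWord.two_le_abs {u v a : ℤ} {l : List ℤ} (hu : 2 ≤ u) (hv : 2 ≤ v)
    (h : IsReducedWord u v (a :: l)) : ∀ x ∈ l, 2 ≤ |x| :=
  (divProp_cons.mp h.1).2.two_le_abs hv hu h.2

section Reconstruction

variable (u v : ℤ) {s0 : ℤ} {t : List ℤ} (ht : IsShortCF t)
include ht

lemma fCF_eq_of_one_lt {s1 : ℤ} {m : List ℤ} (hv : v ∣ s0) (hs1 : s1 ≠ 0)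
    (hy : 1 < E (s1 :: m)) (ih : ∀ t, IsShortCF t → E t = E (s1 :: m) → fCF v u t = s1 :: m)
    (hts : E t = E (s0 :: s1 :: m)) : fCF u v t = s0 :: s1 :: m := by
  have : 1 / E (s1 :: m) < 1 := by rw [div_lt_one (by linarith)]; exact hy
  have : 0 < 1 / E (s1 :: m) := by positivity
  obtain ⟨t', rfl, ht', -⟩ := ht.eq_cons_of_lt_E (k := s0)
    (by rw [hts, E_cons]; linarith) (by rw [hts, E_cons]; linarith)
  obtain ⟨q1, l, rfl⟩ := List.exists_cons_of_ne_nil ht'.1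
  rw [fCF_cons_cons_of_dvd u v hv, ih _ ht' (E_cons_inj.mp hts), oplus_singleton_cons _ hs1]

lemma fCF_eq_of_lt_neg_two {s1 : ℤ} {m : List ℤ} (hv2 : 2 ≤ v) (hv : v ∣ s0)
    (hs1 : s1 ≠ 0) (hy : E (s1 :: m) < -2)
    (ih : ∀ t, IsShortCF t → E t = E ((s1 :: m).map (fun x => -x)) →
      fCF v u t = (s1 :: m).map (fun x => -x))
    (hts : E t = E (s0 :: s1 :: m)) : fCF u v t = s0 :: s1 :: m := by
  set y := E (s1 :: m)
  have hr1 : -(1 / 2) < 1 / y := by rw [lt_div_iff_of_neg (by linarith)]; linarith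
  have hr2 : 1 / y < 0 := by rw [one_div_neg]; linarith
  obtain ⟨t', rfl, ht', hE'⟩ := ht.eq_cons_of_lt_E (k := s0 - 1)
    (by rw [hts, E_cons]; push_cast; linarith) (by rw [hts, E_cons]; push_cast; linarith)
  replace hE' : E t' = 1 / (1 + 1 / y) := by rw [hE', hts, E_cons]; push_cast; ring
  obtain ⟨t'', rfl, ht'', -⟩ := ht'.eq_cons_of_lt_E (k := 1)
    (by rw [hE']; push_cast; exact one_lt_one_div (by linarith) (by linarith))
    (by rw [hE', div_lt_iff₀ (by linarith)]; push_cast; linarith)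
  obtain ⟨c, l, rfl⟩ := List.exists_cons_of_ne_nil ht''.1
  have hc := ht'.one_lt_E_of_cons (List.cons_ne_nil c l)
  rw [E_cons_one_cons _ _ _ (by linarith), sub_add_cancel, E_cons_inj, E_map_neg] at hts
  rw [fCF_cons_one_cons u v (not_dvd_sub_one hv2 hv), sub_add_cancel,
    ih _ (ht''.cons_of_cons _) (by rw [E_map_neg, ← hts, neg_neg]), List.map_map]
  simpa using oplus_singleton_cons s0 hs1 m

lemma fCF_eq_of_eq_neg_two (hv2 : 2 ≤ v) (hv : v ∣ s0) (hts : E t = E [s0, -2]) :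
    fCF u v t = [s0, -2] := by
  have hval : E [s0, -2] = (s0 - 1 : ℤ) + 1 / 2 := by simp only [E]; push_cast; ring
  obtain ⟨t', rfl, ht', hE'⟩ := ht.eq_cons_of_lt_E (k := s0 - 1)
    (by rw [hts, hval]; linarith) (by rw [hts, hval]; push_cast; linarith)
  rw [hts, hval, add_sub_cancel_left, one_div_one_div] at hE'
  rw [ht'.eq_singleton_of_E_eq (n := 2) (by rw [hE']; norm_num),
    fCF_pair_two u v (not_dvd_sub_one hv2 hv), sub_add_cancel]

lemma fCF_eq_of_neg_two_cons {c0 : ℤ} {m : List ℤ} (hu : u ∣ -2) (hv2 : 2 ≤ v)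
    (hv : v ∣ s0) (hc0 : c0 ≠ 0) (hw : 2 < E (c0 :: m))
    (ih : ∀ t, IsShortCF t → E t = E (c0 :: m) → fCF u v t = c0 :: m)
    (hts : E t = E (s0 :: -2 :: c0 :: m)) : fCF u v t = s0 :: -2 :: c0 :: m := by
  set w := E (c0 :: m)
  have hy : E (-2 :: c0 :: m) = -2 + 1 / w := by rw [E_cons]; push_cast; ring
  have hw1 : 0 < 1 / w := by positivity
  have hw2 : 1 / w < 1 / 2 := by rw [div_lt_div_iff₀ (by linarith) (by norm_num)]; linarith
  set y := E (-2 :: c0 :: m)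
  have hr1 : -(2 / 3) < 1 / y := by rw [lt_div_iff_of_neg (by linarith)]; linarith
  have hr2 : 1 / y < -(1 / 2) := by rw [div_lt_iff_of_neg (by linarith)]; linarith
  obtain ⟨t', rfl, ht', hE'⟩ := ht.eq_cons_of_lt_E (k := s0 - 1)
    (by rw [hts, E_cons]; push_cast; linarith) (by rw [hts, E_cons]; push_cast; linarith)
  replace hE' : E t' = 1 / (1 + 1 / y) := by rw [hE', hts, E_cons]; push_cast; ring
  obtain ⟨t'', rfl, ht'', -⟩ := ht'.eq_cons_of_lt_E (k := 2)
    (by rw [hE', lt_div_iff₀ (by linarith)]; push_cast; linarith)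
    (by rw [hE', div_lt_iff₀ (by linarith)]; push_cast; linarith)
  obtain ⟨c, l, rfl⟩ := List.exists_cons_of_ne_nil ht''.1
  have hc := ht'.one_lt_E_of_cons (List.cons_ne_nil c l)
  rw [E_cons_two_cons _ _ _ (by linarith), sub_add_cancel, E_cons_inj, E_cons_inj] at hts
  rw [fCF_cons_two_cons u v (not_dvd_sub_one hv2 hv), sub_add_cancel,
    fCF_cons_cons_of_dvd v u hu, ih _ (ht''.cons_of_cons _) hts, oplus_singleton_cons _ hc0,
    oplus_singleton_cons _ (by norm_num)]

end Reconstruction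

lemma E_cons_cases {s1 : ℤ} {m : List ℤ} (hs1 : 2 ≤ |s1|) (h : ∀ x ∈ m, 2 ≤ |x|) :
    1 < E (s1 :: m) ∨ E (s1 :: m) < -2 ∨ (s1 = -2 ∧ m = []) ∨
      (s1 = -2 ∧ m ≠ [] ∧ 0 < E m) := by
  rcases eq_or_ne m [] with rfl | hm
  · rw [show E [s1] = s1 from rfl]
    rcases le_abs'.mp hs1 with hneg | hpos
    · rcases hneg.lt_or_eq with hlt | rfl
      · exact Or.inr (Or.inl (by exact_mod_cast hlt))
      · exact Or.inr (Or.inr (Or.inl ⟨rfl, rfl⟩))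
    · exact Or.inl (by exact_mod_cast (by omega : 1 < s1))
  have hE := one_lt_abs_E hm h
  obtain ⟨hr1, hr2⟩ := abs_lt.mp
    (show |1 / E m| < 1 by rw [abs_div, abs_one, div_lt_one (by linarith)]; exact hE)
  rw [E_cons]
  rcases le_abs'.mp hs1 with hneg | hpos
  · have : (s1 : ℚ) ≤ -2 := by exact_mod_cast hneg
    rcases lt_or_gt_of_ne (show E m ≠ 0 from fun h0 => by norm_num [h0] at hE) with hEn | hEp
    · exact Or.inr (Or.inl (by linarith [one_div_neg.mpr hEn]))
    · rcases hneg.lt_or_eq with hlt | rfl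
      · have : (s1 : ℚ) ≤ -3 := by exact_mod_cast (show s1 ≤ -3 by omega)
        exact Or.inr (Or.inl (by linarith))
      · exact Or.inr (Or.inr (Or.inr ⟨rfl, hm, hEp⟩))
  · have : (2 : ℚ) ≤ s1 := by exact_mod_cast hpos
    exact Or.inl (by linarith)

theorem fCF_eq_of_isReducedWord {u v : ℤ} (hu : 2 ≤ u) (hv : 2 ≤ v) (huv : u * v ≠ 4) :
    ∀ {s0 : ℤ} {m : List ℤ}, IsReducedWord u v (s0 :: m) →
      ∀ {t : List ℤ}, IsShortCF t → E t = E (s0 :: m) → fCF u v t = s0 :: m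
  | s0, [], _, t, ht, hts => by rw [ht.eq_singleton_of_E_eq hts, fCF_singleton]
  | s0, s1 :: m, hs, t, ht, hts => by
    have huv' : v * u ≠ 4 := by rwa [mul_comm]
    have hv0 : v ∣ s0 := (divProp_cons.mp hs.1).1
    have hbig := hs.two_le_abs hu hv
    rw [List.forall_mem_cons] at hbig
    have hs1 : s1 ≠ 0 := fun h => by simp [h] at hbig
    rcases E_cons_cases hbig.1 hbig.2 with hy | hy | ⟨rfl, rfl⟩ | ⟨rfl, hm, hw⟩
    · exact fCF_eq_of_one_lt u v ht hv0 hs1 hy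
        (fun t ht hts => fCF_eq_of_isReducedWord hv hu huv' hs.tail ht hts) hts
    · exact fCF_eq_of_lt_neg_two u v ht hv hv0 hs1 hy
        (fun t ht hts => fCF_eq_of_isReducedWord hv hu huv' hs.tail.map_neg ht hts) hts
    · exact fCF_eq_of_eq_neg_two u v ht hv hv0 hts
    obtain ⟨c0, m, rfl⟩ := List.exists_cons_of_ne_nil hm
    have hu2 : u ∣ -2 := (divProp_cons.mp (divProp_cons.mp hs.1).2).1
    have hv3 : 3 ≤ v := by
      have := Int.le_of_dvd (by norm_num) (dvd_neg.mpr hu2)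
      have : v ≠ 2 := fun h => huv (by rw [h]; omega)
      omega
    have hc0 : 2 < |E (c0 :: m)| := by
      have hc := hs.2 c0 (by simp)
      have := Int.le_of_dvd (abs_pos.mpr hc) ((dvd_abs _ _).mpr (divProp_cons.mp hs.tail.tail.1).1)
      have : (3 : ℚ) ≤ |(c0 : ℚ)| := by exact_mod_cast (by omega : (3 : ℤ) ≤ |c0|)
      linarith [sub_one_lt_abs_E hbig.2]
    exact fCF_eq_of_neg_two_cons u v ht hu2 hv hv0 (hs.2 c0 (by simp))
      (by rwa [abs_of_pos hw] at hc0)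
      (fun t ht hts => fCF_eq_of_isReducedWord hu hv huv hs.tail.tail ht hts) hts
termination_by _ m => m.length

@[simp] lemma coe_Rmat (a : ℤ) : (Rmat a : Matrix (Fin 2) (Fin 2) ℤ) = !![1, a; 0, 1] := rfl

@[simp] lemma coe_Lmat (b : ℤ) : (Lmat b : Matrix (Fin 2) (Fin 2) ℤ) = !![1, 0; b, 1] := rfl

@[simp] lemma Rmat_mul_apply_zero (a : ℤ) (N : SL2) (j : Fin 2) :
    (Rmat a * N) 0 j = N 0 j + a * N 1 j := by
  simp [Matrix.SpecialLinearGroup.coe_mul, Matrix.mul_apply, Fin.sum_univ_two]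

@[simp] lemma Rmat_mul_apply_one (a : ℤ) (N : SL2) (j : Fin 2) : (Rmat a * N) 1 j = N 1 j := by
  simp [Matrix.SpecialLinearGroup.coe_mul, Matrix.mul_apply, Fin.sum_univ_two]

@[simp] lemma Lmat_mul_apply_zero (b : ℤ) (N : SL2) (j : Fin 2) : (Lmat b * N) 0 j = N 0 j := by
  simp [Matrix.SpecialLinearGroup.coe_mul, Matrix.mul_apply, Fin.sum_univ_two]

@[simp] lemma Lmat_mul_apply_one (b : ℤ) (N : SL2) (j : Fin 2) :
    (Lmat b * N) 1 j = N 1 j + b * N 0 j := by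
  simp [Matrix.SpecialLinearGroup.coe_mul, Matrix.mul_apply, Fin.sum_univ_two]; ring

lemma mul_Lmat_apply_one (N : SL2) (b : ℤ) (i : Fin 2) : (N * Lmat b) i 1 = N i 1 := by
  simp [Matrix.SpecialLinearGroup.coe_mul, Matrix.mul_apply, Fin.sum_univ_two]

lemma Rmat_mul_Rmat (a b : ℤ) : Rmat a * Rmat b = Rmat (a + b) := by
  ext i j; fin_cases i <;> fin_cases j <;> simp [add_comm]

lemma Lmat_mul_Lmat (a b : ℤ) : Lmat a * Lmat b = Lmat (a + b) := by
  ext i j; fin_cases i <;> fin_cases j <;> simp [add_comm]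

lemma Rmat_zero : Rmat 0 = 1 := by
  ext i j; fin_cases i <;> fin_cases j <;> rfl

lemma Lmat_zero : Lmat 0 = 1 := by
  ext i j; fin_cases i <;> fin_cases j <;> rfl

lemma Rmat_inv (a : ℤ) : (Rmat a)⁻¹ = Rmat (-a) :=
  inv_eq_of_mul_eq_one_right (by rw [Rmat_mul_Rmat, add_neg_cancel, Rmat_zero])

lemma Lmat_inv (b : ℤ) : (Lmat b)⁻¹ = Lmat (-b) :=
  inv_eq_of_mul_eq_one_right (by rw [Lmat_mul_Lmat, add_neg_cancel, Lmat_zero])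

lemma Rmat_zpow (v k : ℤ) : Rmat v ^ k = Rmat (v * k) := by
  induction k using Int.induction_on with
  | zero => rw [zpow_zero, mul_zero, Rmat_zero]
  | succ k ih => rw [zpow_add_one, ih, Rmat_mul_Rmat, mul_add_one]
  | pred k ih => rw [zpow_sub_one, ih, Rmat_inv, Rmat_mul_Rmat, mul_sub_one, sub_eq_add_neg]

lemma Lmat_zpow (u k : ℤ) : Lmat u ^ k = Lmat (u * k) := by
  induction k using Int.induction_on with
  | zero => rw [zpow_zero, mul_zero, Lmat_zero]
  | succ k ih => rw [zpow_add_one, ih, Lmat_mul_Lmat, mul_add_one]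
  | pred k ih => rw [zpow_sub_one, ih, Lmat_inv, Lmat_mul_Lmat, mul_sub_one, sub_eq_add_neg]

lemma Rmat_mem_Guv {u v a : ℤ} (h : v ∣ a) : Rmat a ∈ Guv u v := by
  obtain ⟨k, rfl⟩ := h
  rw [← Rmat_zpow]
  exact zpow_mem (Subgroup.subset_closure (by simp)) k

lemma Lmat_mem_Guv {u v b : ℤ} (h : u ∣ b) : Lmat b ∈ Guv u v := by
  obtain ⟨k, rfl⟩ := h
  rw [← Lmat_zpow]
  exact zpow_mem (Subgroup.subset_closure (by simp)) k

lemma SL2.det_eq (N : SL2) : N 0 0 * N 1 1 - N 0 1 * N 1 0 = 1 := by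
  rw [← Matrix.det_fin_two]; exact N.2

lemma SL2.isCoprime_apply (N : SL2) (j : Fin 2) : IsCoprime (N 0 j) (N 1 j) := by
  fin_cases j
  · exact ⟨N 1 1, -N 0 1, by simp only [Fin.zero_eta]; linear_combination N.det_eq⟩
  · exact ⟨-N 1 0, N 0 0, by simp only [Fin.mk_one]; linear_combination N.det_eq⟩

lemma eq_or_eq_neg_of_div_eq_div {x y b d : ℤ} (hxy : IsCoprime x y) (hbd : IsCoprime b d)
    (hy : y ≠ 0) (hd : d ≠ 0) (h : (x : ℚ) / y = b / d) :
    (x = b ∧ y = d) ∨ (x = -b ∧ y = -d) := by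
  have h' : x * d = b * y := by
    exact_mod_cast (div_eq_div_iff (Int.cast_ne_zero.mpr hy) (Int.cast_ne_zero.mpr hd)).mp h
  have hyd : y ∣ d := hxy.symm.dvd_of_dvd_mul_left ⟨b, by rw [h']; ring⟩
  have hdy : d ∣ y := hbd.symm.dvd_of_dvd_mul_left ⟨x, by rw [← h']; ring⟩
  rcases Int.associated_iff.mp (associated_of_dvd_dvd hyd hdy) with rfl | rfl
  · exact Or.inl ⟨mul_right_cancel₀ hd h', rfl⟩
  · exact Or.inr ⟨mul_right_cancel₀ hd (by linear_combination h'), by ring⟩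

def gscrSubgroup (u v : ℤ) : Subgroup SL2 where
  carrier := Gscr u v
  one_mem' := ⟨0, 0, 0, 0, by ext i j; fin_cases i <;> fin_cases j <;> simp⟩
  mul_mem' := by
    rintro A B ⟨a1, a2, a3, a4, hA⟩ ⟨b1, b2, b3, b4, hB⟩
    refine ⟨a1 + b1 + u * v * a1 * b1 + a2 * b3, b2 + u * v * a1 * b2 + a2 + u * v * a2 * b4,
      a3 + u * v * a3 * b1 + b3 + u * v * a4 * b3, a3 * b2 + a4 + b4 + u * v * a4 * b4, ?_⟩
    rw [Matrix.SpecialLinearGroup.coe_mul, hA, hB]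
    ext i j; fin_cases i <;> fin_cases j <;> simp [Matrix.mul_apply, Fin.sum_univ_two] <;> ring
  inv_mem' := by
    rintro A ⟨a1, a2, a3, a4, hA⟩
    refine ⟨a4, -a2, -a3, a1, ?_⟩
    rw [Matrix.SpecialLinearGroup.SL2_inv_expl]
    ext i j; fin_cases i <;> fin_cases j <;> simp [hA]

lemma Guv_le_gscrSubgroup (u v : ℤ) : Guv u v ≤ gscrSubgroup u v := by
  rw [Guv, Subgroup.closure_le]
  rintro _ (rfl | rfl)
  · exact ⟨0, 0, 1, 0, by ext i j; fin_cases i <;> fin_cases j <;> simp⟩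
  · exact ⟨0, 1, 0, 0, by ext i j; fin_cases i <;> fin_cases j <;> simp⟩

section Gscr

variable {u v : ℤ} {N : SL2} (hN : N ∈ Gscr u v)
include hN

lemma Gscr.dvd_apply_one_zero : u ∣ N 1 0 := by
  obtain ⟨_, _, _, _, h⟩ := hN
  simp [h]

lemma Gscr.dvd_apply_one_one_sub_one : u * v ∣ N 1 1 - 1 := by
  obtain ⟨_, _, _, _, h⟩ := hN
  simp [h]

end Gscr

lemma Gscr.apply_one_eq_of_div_eq {u v : ℤ} (hu : 2 ≤ u) (hv : 2 ≤ v) {M N : SL2}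
    (hM : M ∈ Gscr u v) (hN : N ∈ Gscr u v) {j : Fin 2} (hj : N 1 j ≠ 0)
    (h : (N 0 j : ℚ) / N 1 j = M 0 1 / M 1 1) : j = 1 ∧ N 0 1 = M 0 1 ∧ N 1 1 = M 1 1 := by
  have hd := Gscr.dvd_apply_one_one_sub_one hM
  have huv : 4 ≤ u * v := by nlinarith
  have hd0 : M 1 1 ≠ 0 := fun h0 => by
    rw [h0, zero_sub, dvd_neg] at hd
    have := Int.le_of_dvd one_pos hd
    omega
  fin_cases j
  · exfalso
    have hud : u ∣ M 1 1 := by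
      rcases eq_or_eq_neg_of_div_eq_div (N.isCoprime_apply 0) (M.isCoprime_apply 1) hj hd0 h
        with ⟨-, h1⟩ | ⟨-, h1⟩ <;> simpa [h1] using Gscr.dvd_apply_one_zero hN
    have := Int.le_of_dvd one_pos (by simpa using dvd_sub hud ((dvd_mul_right u v).trans hd))
    omega
  · rcases eq_or_eq_neg_of_div_eq_div (N.isCoprime_apply 1) (M.isCoprime_apply 1) hj hd0 h
      with h01 | ⟨-, h1⟩
    · exact ⟨rfl, h01⟩
    · have hN1 := Gscr.dvd_apply_one_one_sub_one hN
      rw [h1] at hN1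
      have : u * v ∣ 2 := by rw [← dvd_neg]; convert dvd_add hd hN1 using 1; ring
      have := Int.le_of_dvd two_pos this
      omega

lemma mem_Guv_of_apply_one_eq {u v : ℤ} {M N : SL2} (hM : M ∈ Gscr u v) (hN : N ∈ Guv u v)
    (h0 : N 0 1 = M 0 1) (h1 : N 1 1 = M 1 1) : M ∈ Guv u v := by
  set P := N⁻¹ * M
  have hP : P ∈ Gscr u v := mul_mem (inv_mem (Guv_le_gscrSubgroup u v hN)) hM
  have hPapply : ∀ i, P i 1 = N⁻¹ i 0 * N 0 1 + N⁻¹ i 1 * N 1 1 := fun i => by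
    simp [P, Matrix.SpecialLinearGroup.coe_mul, Matrix.mul_apply, Fin.sum_univ_two, h0, h1]
  have hP01 : P 0 1 = 0 := by
    rw [hPapply, Matrix.SpecialLinearGroup.SL2_inv_expl]; simp; ring
  have hP11 : P 1 1 = 1 := by
    rw [hPapply, Matrix.SpecialLinearGroup.SL2_inv_expl]; simp; linear_combination N.det_eq
  have hP00 : P 0 0 = 1 := by simpa [hP01, hP11] using P.det_eq
  have hPL : P = Lmat (P 1 0) := by
    ext i j; fin_cases i <;> fin_cases j <;> simp [hP00, hP01, hP11]
  rw [← mul_inv_cancel_left N M]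
  show N * P ∈ Guv u v
  rw [hPL]
  exact mul_mem hN (Lmat_mem_Guv (Gscr.dvd_apply_one_zero hP))

-- `R_{s₀} L_{s₁} R_{s₂} ⋯`; unlike `altProd`, the list holds entries, not exponents.
def rlWord : List ℤ → SL2
  | [] => 1
  | [a] => Rmat a
  | a :: b :: l => Rmat a * (Lmat b * rlWord l)

lemma rlWord_mem_Guv {u v : ℤ} : ∀ {s : List ℤ}, DivProp u v s → rlWord s ∈ Guv u v
  | [], _ => one_mem _
  | [_], h => Rmat_mem_Guv (divProp_cons.mp h).1
  | _ :: _ :: _, h => by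
    obtain ⟨ha, hb, hl⟩ := divProp_cons_cons.mp h
    exact mul_mem (Rmat_mem_Guv ha) (mul_mem (Lmat_mem_Guv hb) (rlWord_mem_Guv hl))

lemma rlWord_cons_cons_apply_div {a b : ℤ} {l : List ℤ} {j : Fin 2} (hl : 1 < |E l|)
    (hbl : 1 < |E (b :: l)|) (hxy : (rlWord l 0 j : ℚ) / rlWord l 1 j = E l) :
    rlWord (a :: b :: l) 1 j ≠ 0 ∧
      (rlWord (a :: b :: l) 0 j : ℚ) / rlWord (a :: b :: l) 1 j = E (a :: b :: l) := by
  set x := rlWord l 0 j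
  set y := rlWord l 1 j
  have hEbl : E (b :: l) ≠ 0 := fun h => by norm_num [h] at hbl
  have hx : (x : ℚ) ≠ 0 := fun h => by rw [h, zero_div] at hxy; norm_num [← hxy] at hl
  have key : ((y + b * x : ℤ) : ℚ) = x * E (b :: l) := by
    rw [E_cons, ← hxy]; push_cast; field_simp; ring
  have hy' : y + b * x ≠ 0 := fun h => mul_ne_zero hx hEbl (by rw [← key, h, Int.cast_zero])
  simp only [rlWord, Rmat_mul_apply_zero, Rmat_mul_apply_one, Lmat_mul_apply_zero,
    Lmat_mul_apply_one]
  refine ⟨hy', ?_⟩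
  push_cast at key ⊢
  rw [key, E_cons a]
  field_simp
  ring

theorem rlWord_apply_div_eq_E {j : Fin 2} :
    ∀ {s : List ℤ}, (j : ℕ) = s.length % 2 → s ≠ [] → TailsBig s →
      rlWord s 1 j ≠ 0 ∧ (rlWord s 0 j : ℚ) / rlWord s 1 j = E s
  | [a], hj, _, _ => by
    obtain rfl : j = 1 := Fin.ext hj
    simp [rlWord, E]
  | [a, b], hj, _, h => by
    obtain rfl : j = 0 := Fin.ext (by simpa using hj)
    have hb : (b : ℚ) ≠ 0 := fun hb => by
      have := h 1 one_pos (by simp)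
      norm_num [E, hb] at this
    simp only [rlWord, Rmat_mul_apply_zero, Rmat_mul_apply_one, Lmat_mul_apply_zero,
      Lmat_mul_apply_one]
    refine ⟨by simpa using hb, ?_⟩
    simp [E]
    field_simp
    ring
  | a :: b :: c :: l, hj, _, h =>
    rlWord_cons_cons_apply_div (by simpa using h 2 (by omega) (by simp))
      (by simpa using h 1 one_pos (by simp))
      (rlWord_apply_div_eq_E (by simp at hj ⊢; omega) (List.cons_ne_nil c l) h.drop_two).2

section NormalForm

variable {u v : ℤ}

lemma Rmat_mul_rlWord_cons (e a : ℤ) (l : List ℤ) :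
    Rmat e * rlWord (a :: l) = rlWord ((e + a) :: l) := by
  rcases l with _ | ⟨b, l⟩
  · exact Rmat_mul_Rmat e a
  · simp only [rlWord, ← mul_assoc, Rmat_mul_Rmat]

lemma rlWord_zero_cons_cons (b : ℤ) (l : List ℤ) :
    rlWord (0 :: b :: l) = Lmat b * rlWord l := by
  rw [rlWord, Rmat_zero, one_mul]

lemma IsReducedWord.exists_Rmat_mul {e : ℤ} (he : v ∣ e) {s : List ℤ}
    (hs : IsReducedWord u v s) (hodd : Odd s.length) :
    ∃ s', IsReducedWord u v s' ∧ Odd s'.length ∧ Rmat e * rlWord s = rlWord s' := by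
  obtain ⟨a, l, rfl⟩ := List.exists_cons_of_ne_nil (List.ne_nil_of_length_pos hodd.pos)
  obtain ⟨ha, hl⟩ := divProp_cons.mp hs.1
  exact ⟨(e + a) :: l, ⟨divProp_cons.mpr ⟨dvd_add he ha, hl⟩, hs.2⟩, by simpa using hodd,
    Rmat_mul_rlWord_cons e a l⟩

lemma IsReducedWord.exists_Lmat_mul {e : ℤ} (he : u ∣ e) (he0 : e ≠ 0) {s : List ℤ}
    (hs : IsReducedWord u v s) (hodd : Odd s.length) :
    ∃ s' k, IsReducedWord u v s' ∧ Odd s'.length ∧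
      Lmat e * rlWord s = rlWord s' * Lmat k := by
  obtain ⟨a, l, rfl⟩ := List.exists_cons_of_ne_nil (List.ne_nil_of_length_pos hodd.pos)
  by_cases ha : a ≠ 0
  · refine ⟨0 :: e :: a :: l, 0, ⟨divProp_cons_cons.mpr ⟨dvd_zero v, he, hs.1⟩, ?_⟩,
      by simpa [parity_simps] using hodd, by rw [Lmat_zero, mul_one, rlWord_zero_cons_cons]⟩
    simpa [he0, ha] using hs.2
  obtain rfl := not_not.mp ha
  rcases l with _ | ⟨b, l⟩
  · exact ⟨[0], e, ⟨divProp_cons.mpr ⟨dvd_zero v, divProp_nil v u⟩, by simp⟩, by simp,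
      by simp [rlWord, Rmat_zero]⟩
  obtain ⟨-, hb, hl⟩ := divProp_cons_cons.mp hs.1
  have hl0 : ∀ x ∈ l, x ≠ 0 := fun x hx => hs.2 x (List.mem_cons_of_mem b hx)
  by_cases heb : e + b = 0
  · refine ⟨l, 0, ⟨hl, fun x hx => hl0 x (List.mem_of_mem_tail hx)⟩,
      by simpa [parity_simps] using hodd, ?_⟩
    rw [Lmat_zero, mul_one, rlWord_zero_cons_cons, ← mul_assoc, Lmat_mul_Lmat, heb, Lmat_zero,
      one_mul]
  · refine ⟨0 :: (e + b) :: l, 0,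
      ⟨divProp_cons_cons.mpr ⟨dvd_zero v, dvd_add he hb, hl⟩, ?_⟩,
      by simpa using hodd, ?_⟩
    · simpa [heb] using hl0
    · rw [Lmat_zero, mul_one, rlWord_zero_cons_cons, rlWord_zero_cons_cons, ← mul_assoc,
        Lmat_mul_Lmat]

theorem exists_rlWord_mul_Lmat_eq (hu : u ≠ 0) {M : SL2} (hM : M ∈ Guv u v) :
    ∃ s k, IsReducedWord u v s ∧ Odd s.length ∧ rlWord s * Lmat k = M := by
  have step : ∀ g : SL2,
      (∃ e, u ∣ e ∧ e ≠ 0 ∧ g = Lmat e) ∨ (∃ e, v ∣ e ∧ g = Rmat e) →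
      ∀ N : SL2, (∃ s k, IsReducedWord u v s ∧ Odd s.length ∧ rlWord s * Lmat k = N) →
      ∃ s k, IsReducedWord u v s ∧ Odd s.length ∧ rlWord s * Lmat k = g * N := by
    rintro g (⟨e, he, he0, rfl⟩ | ⟨e, he, rfl⟩) N ⟨s, k, hs, hodd, rfl⟩
    · obtain ⟨s', k', hs', hodd', h⟩ := hs.exists_Lmat_mul he he0 hodd
      exact ⟨s', k' + k, hs', hodd', by rw [← mul_assoc, h, mul_assoc, Lmat_mul_Lmat]⟩
    · obtain ⟨s', hs', hodd', h⟩ := hs.exists_Rmat_mul he hodd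
      exact ⟨s', k, hs', hodd', by rw [← mul_assoc, h]⟩
  induction hM using Subgroup.closure_induction_left with
  | one =>
    exact ⟨[0], 0, ⟨divProp_cons.mpr ⟨dvd_zero v, divProp_nil v u⟩, by simp⟩, by simp,
      by simp [rlWord, Rmat_zero, Lmat_zero]⟩
  | mul_left x hx N _ ih =>
    rcases hx with rfl | rfl
    · exact step _ (Or.inl ⟨u, dvd_refl u, hu, rfl⟩) N ih
    · exact step _ (Or.inr ⟨v, dvd_refl v, rfl⟩) N ih
  | inv_mul_cancel x hx N _ ih =>
    rcases hx with rfl | rfl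
    · exact step _ (Or.inl ⟨-u, dvd_neg.mpr (dvd_refl u), neg_ne_zero.mpr hu, Lmat_inv u⟩) N ih
    · exact step _ (Or.inr ⟨-v, dvd_neg.mpr (dvd_refl v), Rmat_inv v⟩) N ih

end NormalForm

/-- Main theorem: for `u, v ≥ 2` with `uv ≠ 4` and `M = [[a,b],[c,d]] ∈ 𝒢_{u,v}`,
`M ∈ G_{u,v}` iff `(f_{u,v} ∘ C)(b/d)` satisfies the `(u,v)`-divisibility property. -/
theorem membership_criterion (u v : ℤ) (hu : 2 ≤ u) (hv : 2 ≤ v) (huv : u * v ≠ 4)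
    (C : ℚ → List ℤ) (hC : ∀ x : ℚ, IsShortCF (C x) ∧ E (C x) = x)
    (M : SL2) (hM : M ∈ Gscr u v) :
    M ∈ Guv u v ↔
      DivProp u v (fCF u v (C (((M : Matrix (Fin 2) (Fin 2) ℤ) 0 1 : ℚ) /
        ((M : Matrix (Fin 2) (Fin 2) ℤ) 1 1 : ℚ)))) := by
  constructor
  · intro hMG
    obtain ⟨s, k, hs, hodd, rfl⟩ := exists_rlWord_mul_Lmat_eq (by omega) hMG
    obtain ⟨a, l, rfl⟩ := List.exists_cons_of_ne_nil (List.ne_nil_of_length_pos hodd.pos)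
    obtain ⟨-, hE⟩ := rlWord_apply_div_eq_E (j := 1) (Nat.odd_iff.mp hodd).symm
      (List.cons_ne_nil a l) (tailsBig_of_two_le_abs (hs.two_le_abs hu hv))
    simp only [mul_Lmat_apply_one]
    rw [hE, fCF_eq_of_isReducedWord hu hv huv hs (hC _).1 (hC _).2]
    exact hs.1
  · intro hdiv
    set x : ℚ := M 0 1 / M 1 1
    obtain ⟨⟨c, r, hr, -⟩, hE, hT⟩ := (hC x).1.isBigTailExpansion_fCF u v
    set t := fCF u v (C x)
    have hN := rlWord_mem_Guv hdiv
    obtain ⟨hy, hxy⟩ := rlWord_apply_div_eq_E (j := ⟨t.length % 2, Nat.mod_lt _ two_pos⟩)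
      rfl (by rw [hr]; exact List.cons_ne_nil c r) hT
    rw [hE, (hC _).2] at hxy
    obtain ⟨-, h0, h1⟩ :=
      Gscr.apply_one_eq_of_div_eq hu hv hM (Guv_le_gscrSubgroup u v hN) hy hxy
    exact mem_Guv_of_apply_one_eq hM hN h0 h1
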